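/- Let D be a rotation group on a three-dimensional real vector space V and let v, w be linearly independent. The unique rotation r with r : [v,w] ↦ [v,-w] satisfies r² = id and r v = v; moreover the only rotation s ≠ r with s v = v and s(ℝv + ℝw) = ℝv + ℝw is the identity. -/

import Mathlib

/-- The ray (half-line) spanned by `v`: all nonnegative multiples of `v`. -/
def Ray' {V : Type*} [AddCommGroup V] [Module ℝ V] (v : V) : Set V :=
  {x | ∃ c : ℝ, 0 ≤ c ∧ x = c • v}

/-- The half-plane `ℝ v + ℝ≥0 w`. -/
def HalfPlane {V : Type*} [AddCommGroup V] [Module ℝ V] (v w : V) : Set V :=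
  {x | ∃ a b : ℝ, 0 ≤ b ∧ x = a • v + b • w}

/-- `D` is a rotation group: for any two pairs of (half-plane, ray on its boundary)
there is exactly one element of `D` mapping the first pair to the second. -/
def IsRotationGroup {V : Type*} [AddCommGroup V] [Module ℝ V]
    (D : Subgroup (V ≃ₗ[ℝ] V)) : Prop :=
  ∀ v w v' w' : V, LinearIndependent ℝ ![v, w] → LinearIndependent ℝ ![v', w'] →
    ∃! d : V ≃ₗ[ℝ] V, d ∈ D ∧
      (d : V ≃ₗ[ℝ] V) '' HalfPlane v w = HalfPlane v' w' ∧
      (d : V ≃ₗ[ℝ] V) '' Ray' v = Ray' v'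

/-- `w ⊥ v` : some rotation sends `w` to `-w` and fixes `v`. -/
def Perp {V : Type*} [AddCommGroup V] [Module ℝ V]
    (D : Subgroup (V ≃ₗ[ℝ] V)) (w v : V) : Prop :=
  ∃ r ∈ D, r w = -w ∧ r v = v

/-! The rotation `r : [v,w] ↦ [v,-w]` maps `v` to a positive multiple of itself and
`w` into the open half-plane of `-w`; hence it also sends `[v,-w]` back to
`[v,w]`, so `r²` fixes `[v,w]` and is the identity by uniqueness. A rotation `s` fixing `v`
and the plane of `v, w` sends `w` to `α v + β w` with `β ≠ 0`, and so maps `[v,w]` to `[v,w]`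
or to `[v,-w]` according to the sign of `β`; uniqueness gives `s = 1` or `s = r`. -/

section HalfPlane

variable {V : Type*} [AddCommGroup V] [Module ℝ V]

lemma image_halfPlane (e : V ≃ₗ[ℝ] V) (v w : V) :
    e '' HalfPlane v w = HalfPlane (e v) (e w) := by
  ext x
  constructor
  · rintro ⟨y, ⟨a, b, hb, rfl⟩, rfl⟩
    exact ⟨a, b, hb, by simp⟩
  · rintro ⟨a, b, hb, rfl⟩
    exact ⟨a • v + b • w, ⟨a, b, hb, rfl⟩, by simp⟩

lemma image_ray (e : V ≃ₗ[ℝ] V) (v : V) : e '' Ray' v = Ray' (e v) := by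
  ext x
  constructor
  · rintro ⟨y, ⟨c, hc, rfl⟩, rfl⟩
    exact ⟨c, hc, by simp⟩
  · rintro ⟨c, hc, rfl⟩
    exact ⟨c • v, ⟨c, hc, rfl⟩, by simp⟩

lemma halfPlane_smul_left {c : ℝ} (hc : c ≠ 0) (v w : V) :
    HalfPlane (c • v) w = HalfPlane v w := by
  ext x
  constructor
  · rintro ⟨a, b, hb, rfl⟩
    exact ⟨a * c, b, hb, by rw [mul_smul]⟩
  · rintro ⟨a, b, hb, rfl⟩
    exact ⟨a / c, b, hb, by rw [smul_smul, div_mul_cancel₀ _ hc]⟩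

lemma halfPlane_add_smul_of_pos (v w : V) (a : ℝ) {b : ℝ} (hb : 0 < b) :
    HalfPlane v (a • v + b • w) = HalfPlane v w := by
  ext x
  constructor
  · rintro ⟨p, q, hq, rfl⟩
    exact ⟨p + q * a, q * b, by positivity, by module⟩
  · rintro ⟨p, q, hq, rfl⟩
    refine ⟨p - q / b * a, q / b, by positivity, ?_⟩
    match_scalars
    · field_simp
      ring
    · field_simp

lemma exists_pos_of_halfPlane_eq {v w x : V} (hvw : LinearIndependent ℝ ![v, w])
    (h : HalfPlane v x = HalfPlane v w) : ∃ a b : ℝ, 0 < b ∧ x = a • v + b • w := by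
  obtain ⟨a, b, hb, hx⟩ : x ∈ HalfPlane v w := h ▸ ⟨0, 1, zero_le_one, by simp⟩
  obtain ⟨a', b', -, hw⟩ : w ∈ HalfPlane v x := h ▸ ⟨0, 1, zero_le_one, by simp⟩
  have hcomb : (a' + b' * a) • v + (b' * b - 1) • w = 0 := by
    rw [hx] at hw
    linear_combination (norm := module) -hw
  have hbb' : b' * b = 1 := by linarith [(LinearIndependent.pair_iff.mp hvw _ _ hcomb).2]
  exact ⟨a, b, lt_of_le_of_ne hb (by rintro rfl; simp at hbb'), hx⟩

lemma exists_pos_smul_of_image_ray_eq (e : V ≃ₗ[ℝ] V) {v : V} (h : e '' Ray' v = Ray' v)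
    (hv : v ≠ 0) : ∃ c : ℝ, 0 < c ∧ e v = c • v := by
  obtain ⟨c, hc, hcv⟩ : e v ∈ Ray' v := h ▸ ⟨v, ⟨1, zero_le_one, (one_smul ℝ v).symm⟩, rfl⟩
  refine ⟨c, lt_of_le_of_ne hc ?_, hcv⟩
  rintro rfl
  exact hv (e.map_eq_zero_iff.mp (by simpa using hcv))

end HalfPlane

namespace IsRotationGroup

variable {V : Type*} [AddCommGroup V] [Module ℝ V] {D : Subgroup (V ≃ₗ[ℝ] V)}
  {v w : V} {d d' : V ≃ₗ[ℝ] V}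

theorem eq_of_image_eq (hD : IsRotationGroup D) (hvw : LinearIndependent ℝ ![v, w])
    (hd : d ∈ D) (hd' : d' ∈ D) (hH : d '' HalfPlane v w = d' '' HalfPlane v w)
    (hR : d '' Ray' v = d' '' Ray' v) : d = d' := by
  have hLI : LinearIndependent ℝ ![d v, d w] := by
    refine LinearIndependent.pair_iff.mpr fun a b hab => LinearIndependent.pair_iff.mp hvw a b ?_
    exact d.map_eq_zero_iff.mp (by simpa using hab)
  exact (hD v w (d v) (d w) hvw hLI).unique
    ⟨hd, image_halfPlane d v w, image_ray d v⟩
    ⟨hd', hH ▸ image_halfPlane d v w, hR ▸ image_ray d v⟩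

theorem eq_one_of_image_eq (hD : IsRotationGroup D) (hvw : LinearIndependent ℝ ![v, w])
    (hd : d ∈ D) (hH : d '' HalfPlane v w = HalfPlane v w) (hR : d '' Ray' v = Ray' v) :
    d = 1 :=
  hD.eq_of_image_eq hvw hd D.one_mem (by simpa using hH) (by simpa using hR)

end IsRotationGroup

section Flip

variable {V : Type*} [AddCommGroup V] [Module ℝ V] {v w : V} {r : V ≃ₗ[ℝ] V}

lemma image_halfPlane_neg_of_flip (hvw : LinearIndependent ℝ ![v, w])
    (hH : r '' HalfPlane v w = HalfPlane v (-w)) (hR : r '' Ray' v = Ray' v) :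
    r '' HalfPlane v (-w) = HalfPlane v w := by
  obtain ⟨c, hc, hcv⟩ := exists_pos_smul_of_image_ray_eq r hR (hvw.ne_zero 0)
  have hrw : HalfPlane v (r w) = HalfPlane v (-w) := by
    rw [← hH, image_halfPlane, hcv, halfPlane_smul_left hc.ne']
  obtain ⟨a, b, hb, hab⟩ :=
    exists_pos_of_halfPlane_eq (LinearIndependent.pair_neg_right_iff.mpr hvw) hrw
  have hrnw : r (-w) = (-a) • v + b • w := by rw [map_neg, hab]; module
  rw [image_halfPlane, hcv, halfPlane_smul_left hc.ne', hrnw, halfPlane_add_smul_of_pos v w _ hb]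

variable {D : Subgroup (V ≃ₗ[ℝ] V)}

theorem sq_eq_one_of_flip (hD : IsRotationGroup D) (hvw : LinearIndependent ℝ ![v, w])
    (hr : r ∈ D) (hH : r '' HalfPlane v w = HalfPlane v (-w)) (hR : r '' Ray' v = Ray' v) :
    r ^ 2 = 1 := by
  have hsq : ⇑(r ^ 2) = r ∘ r := LinearEquiv.coe_pow r 2
  refine hD.eq_one_of_image_eq hvw (pow_mem hr 2) ?_ ?_
  · rw [hsq, Set.image_comp, hH, image_halfPlane_neg_of_flip hvw hH hR]
  · rw [hsq, Set.image_comp, hR, hR]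

theorem apply_eq_self_of_flip (hD : IsRotationGroup D) (hvw : LinearIndependent ℝ ![v, w])
    (hr : r ∈ D) (hH : r '' HalfPlane v w = HalfPlane v (-w)) (hR : r '' Ray' v = Ray' v) :
    r v = v := by
  have hv : v ≠ 0 := hvw.ne_zero 0
  obtain ⟨c, hc, hcv⟩ := exists_pos_smul_of_image_ray_eq r hR hv
  have hrrv : r (r v) = v := by
    rw [← LinearEquiv.mul_apply, ← sq, sq_eq_one_of_flip hD hvw hr hH hR]
    rfl
  have hcc : (c * c - 1) • v = 0 := by
    rw [hcv, map_smul, hcv, smul_smul] at hrrv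
    rw [sub_smul, hrrv, one_smul, sub_self]
  have hc1 : c = 1 := by
    have := (smul_eq_zero.mp hcc).resolve_right hv
    nlinarith
  rw [hcv, hc1, one_smul]

theorem eq_one_or_eq_of_flip (hD : IsRotationGroup D) (hvw : LinearIndependent ℝ ![v, w])
    (hr : r ∈ D) (hH : r '' HalfPlane v w = HalfPlane v (-w)) (hR : r '' Ray' v = Ray' v)
    {s : V ≃ₗ[ℝ] V} (hs : s ∈ D) (hsv : s v = v)
    (hsP : s '' (Submodule.span ℝ {v, w} : Set V) = Submodule.span ℝ {v, w}) :
    s = 1 ∨ s = r := by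
  obtain ⟨α, β, hαβ⟩ : ∃ α β : ℝ, α • v + β • w = s w :=
    Submodule.mem_span_pair.mp <| (Set.ext_iff.mp hsP (s w)).mp <|
      Set.mem_image_of_mem s (Submodule.mem_span_of_mem (by simp))
  have hsH : s '' HalfPlane v w = HalfPlane v (α • v + β • w) := by
    rw [image_halfPlane, hsv, hαβ]
  have hsR : s '' Ray' v = Ray' v := by rw [image_ray, hsv]
  rcases lt_trichotomy β 0 with hβ | rfl | hβ
  · right
    refine hD.eq_of_image_eq hvw hs hr ?_ (hsR.trans hR.symm)
    rw [hsH, hH, show α • v + β • w = α • v + (-β) • (-w) by module,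
      halfPlane_add_smul_of_pos v (-w) α (neg_pos.mpr hβ)]
  · -- `s w = α • v = s (α • v)` would make `w` a multiple of `v`
    refine absurd (LinearIndependent.pair_iff.mp hvw α (-1) ?_).2 (by norm_num)
    rw [s.injective (by rw [map_smul, hsv, ← hαβ, zero_smul, add_zero] : s w = s (α • v))]
    module
  · left
    exact hD.eq_one_of_image_eq hvw hs (hsH.trans (halfPlane_add_smul_of_pos v w α hβ)) hsR

end Flip

theorem stmt1_general {V : Type*} [AddCommGroup V] [Module ℝ V]
    (D : Subgroup (V ≃ₗ[ℝ] V)) (hD : IsRotationGroup D)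
    (v w : V) (hvw : LinearIndependent ℝ ![v, w])
    (r : V ≃ₗ[ℝ] V) (hr : r ∈ D)
    (hH : (r : V ≃ₗ[ℝ] V) '' HalfPlane v w = HalfPlane v (-w))
    (hR : (r : V ≃ₗ[ℝ] V) '' Ray' v = Ray' v) :
    r ^ 2 = 1 ∧ r v = v ∧
      ∀ s : V ≃ₗ[ℝ] V, s ∈ D → s v = v →
        (s : V ≃ₗ[ℝ] V) '' (Submodule.span ℝ {v, w} : Set V) =
          (Submodule.span ℝ {v, w} : Set V) →
        s = 1 ∨ s = r :=
  ⟨sq_eq_one_of_flip hD hvw hr hH hR, apply_eq_self_of_flip hD hvw hr hH hR,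
    fun _ hs hsv hsP => eq_one_or_eq_of_flip hD hvw hr hH hR hs hsv hsP⟩

theorem stmt1 {V : Type*} [AddCommGroup V] [Module ℝ V]
    (hdim : Module.finrank ℝ V = 3)
    (D : Subgroup (V ≃ₗ[ℝ] V)) (hD : IsRotationGroup D)
    (v w : V) (hvw : LinearIndependent ℝ ![v, w])
    (r : V ≃ₗ[ℝ] V) (hr : r ∈ D)
    (hH : (r : V ≃ₗ[ℝ] V) '' HalfPlane v w = HalfPlane v (-w))
    (hR : (r : V ≃ₗ[ℝ] V) '' Ray' v = Ray' v) :
    r ^ 2 = 1 ∧ r v = v ∧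
      ∀ s : V ≃ₗ[ℝ] V, s ∈ D → s v = v →
        (s : V ≃ₗ[ℝ] V) '' (Submodule.span ℝ {v, w} : Set V) =
          (Submodule.span ℝ {v, w} : Set V) →
        s = 1 ∨ s = r :=
  stmt1_general D hD v w hvw r hr hH hR
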